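/- arXiv:1007.5110 — 6 statements merged into one kernel-verified Lean document; each statement's English description precedes it below -/
import Mathlib

section
/- For every 1 ≤ i ≤ N-1 one has p_i · Υ(i+1) = p_{i+1} · (1-(1-α)·p_i) · Υ(i); in particular, if p_i ≠ 0 and p_{i+1} ≠ 0, then Υ(i+1)/p_{i+1} = (1-(1-α)·p_i) · Υ(i)/p_i. -/
open Finset

section BernoulliStep

variable {R : Type*} [CommRing R]

theorem sum_range_succ_pow_mul_shift (a : R) (f : ℤ → R) (n : ℕ) (hf : f (-1) = 0) :
    ∑ s ∈ range (n + 1), a ^ s * f ((s : ℤ) - 1) = a * ∑ s ∈ range n, a ^ s * f s := by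
  rw [sum_range_succ', mul_sum]
  simp only [Nat.cast_add, Nat.cast_one, add_sub_cancel_right, pow_succ, Nat.cast_zero,
    zero_sub, hf, mul_zero, add_zero]
  exact sum_congr rfl fun s _ => by ring

/-- Multiplying a generating function by `q X + (1 - q)` multiplies its value at `a`
by `1 - (1 - a) q`. -/
theorem sum_range_pow_mul_of_bernoulli_step (a q : R) (f g : ℤ → R) (n : ℕ)
    (hlow : f (-1) = 0) (hhigh : f n = 0)
    (hg : ∀ s : ℕ, s ≤ n → g s = q * f ((s : ℤ) - 1) + (1 - q) * f s) :
    ∑ s ∈ range (n + 1), a ^ s * g s = (1 - (1 - a) * q) * ∑ s ∈ range n, a ^ s * f s := by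
  have hsplit : ∑ s ∈ range (n + 1), a ^ s * g s =
      q * ∑ s ∈ range (n + 1), a ^ s * f ((s : ℤ) - 1) +
        (1 - q) * ∑ s ∈ range (n + 1), a ^ s * f s := by
    rw [mul_sum, mul_sum, ← sum_add_distrib]
    refine sum_congr rfl fun s hs => ?_
    rw [hg s (Nat.lt_succ_iff.mp (mem_range.mp hs))]
    ring
  rw [hsplit, sum_range_succ_pow_mul_shift a f n hlow, sum_range_succ, hhigh]
  ring

end BernoulliStep

theorem stmt_1_general (N : ℕ) (p : ℕ → ℝ) (α : ℝ) (S : ℕ → ℤ → ℝ)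
    (hSout : ∀ (i : ℕ) (r : ℤ), i ≤ N → (r < 0 ∨ (i : ℤ) < r) → S i r = 0)
    (hSrec : ∀ (i : ℕ) (r : ℤ), 1 ≤ i → i ≤ N → 0 ≤ r → r ≤ (i : ℤ) →
      S i r = p i * S (i - 1) (r - 1) + (1 - p i) * S (i - 1) r)
    (Υ : ℕ → ℝ)
    (hΥ : ∀ i, 1 ≤ i → i ≤ N → Υ i = p i * ∑ s ∈ Finset.range i, α ^ s * S (i - 1) (s : ℤ))
    (i : ℕ) (hi1 : 1 ≤ i) (hiN : i ≤ N - 1) :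
    p i * Υ (i + 1) = p (i + 1) * (1 - (1 - α) * p i) * Υ i ∧
      (p i ≠ 0 → p (i + 1) ≠ 0 →
        Υ (i + 1) / p (i + 1) = (1 - (1 - α) * p i) * (Υ i / p i)) := by
  have hsum := sum_range_pow_mul_of_bernoulli_step α (p i) (S (i - 1)) (S i) i
    (hSout _ _ (by omega) (Or.inl (by norm_num)))
    (hSout _ _ (by omega) (Or.inr (by omega)))
    (fun s hs => hSrec i s hi1 (by omega) (by positivity) (by exact_mod_cast hs))
  have hΥi := hΥ i hi1 (by omega)
  have hΥsucc : Υ (i + 1) = p (i + 1) * ∑ s ∈ range (i + 1), α ^ s * S i s := by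
    simpa using hΥ (i + 1) (by omega) (by omega)
  rw [hΥsucc, hsum, hΥi]
  refine ⟨by ring, fun hp hpsucc => ?_⟩
  rw [mul_div_cancel_left₀ _ hpsucc, mul_div_cancel_left₀ _ hp]

/-- With `S` as in the recursion and the rank-score
`Υ i = p i * ∑_{s=0}^{i-1} α^s * S (i-1) s`, for every `1 ≤ i ≤ N-1` one has
`p i * Υ (i+1) = p (i+1) * (1-(1-α)*p i) * Υ i`; in particular, if `p i ≠ 0` and
`p (i+1) ≠ 0`, then `Υ (i+1) / p (i+1) = (1-(1-α)*p i) * (Υ i / p i)`. -/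
theorem stmt_1 (N : ℕ) (p : ℕ → ℝ) (α : ℝ) (S : ℕ → ℤ → ℝ)
    (hS0 : S 0 0 = 1)
    (hSout : ∀ (i : ℕ) (r : ℤ), i ≤ N → (r < 0 ∨ (i : ℤ) < r) → S i r = 0)
    (hSrec : ∀ (i : ℕ) (r : ℤ), 1 ≤ i → i ≤ N → 0 ≤ r → r ≤ (i : ℤ) →
      S i r = p i * S (i - 1) (r - 1) + (1 - p i) * S (i - 1) r)
    (Υ : ℕ → ℝ)
    (hΥ : ∀ i, 1 ≤ i → i ≤ N → Υ i = p i * ∑ s ∈ Finset.range i, α ^ s * S (i - 1) (s : ℤ))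
    (i : ℕ) (hi1 : 1 ≤ i) (hiN : i ≤ N - 1) :
    p i * Υ (i + 1) = p (i + 1) * (1 - (1 - α) * p i) * Υ i ∧
      (p i ≠ 0 → p (i + 1) ≠ 0 →
        Υ (i + 1) / p (i + 1) = (1 - (1 - α) * p i) * (Υ i / p i)) :=
  stmt_1_general N p α S hSout hSrec Υ hΥ i hi1 hiN
end

section
/- (Theorem 1, algebraic form) For every 1 ≤ i ≤ N, Υ(i) = p_i · ∏_{j=1}^{i-1} (1 - (1-α)·p_j). In the paper's notation: Υ(t_i) = m_i · ∏_{j<i} c_j where m_i = p_i and c_j = 1-(1-α)·p_j. -/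
/-!
`F k = ∑_{s ≤ k} α^s S(k,s)` is the generating polynomial of row `k` evaluated at `α`. In the
recursion the term `p_k S(k-1, s-1)` is row `k-1` shifted one place, which costs a factor `α`,
so `F k = (p_k α + 1 - p_k) F (k-1)` and `F k = ∏_{j ≤ k} (1 - (1-α) p_j)`; finally
`Υ(i) = p_i F(i-1)`.
-/

open Finset

section RowSum

variable {R : Type*} [CommRing R] (S : ℕ → ℤ → R) (α : R)

def rowSum (k : ℕ) : R := ∑ s ∈ range (k + 1), α ^ s * S k s

variable {S}

lemma sum_pow_mul_shift_eq_mul_rowSum {k : ℕ} (hlow : S k (-1) = 0) :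
    ∑ s ∈ range (k + 2), α ^ s * S k ((s : ℤ) - 1) = α * rowSum S α k := by
  rw [sum_range_succ', rowSum, mul_sum]
  simp only [Nat.cast_zero, zero_sub, hlow, mul_zero, add_zero, Nat.cast_succ,
    add_sub_cancel_right, pow_succ]
  exact sum_congr rfl fun s _ => by ring

lemma sum_pow_mul_eq_rowSum {k : ℕ} (hhigh : S k (k + 1) = 0) :
    ∑ s ∈ range (k + 2), α ^ s * S k s = rowSum S α k := by
  rw [sum_range_succ, rowSum]
  push_cast
  rw [hhigh, mul_zero, add_zero]

lemma rowSum_succ {k : ℕ} {q : R} (hlow : S k (-1) = 0) (hhigh : S k (k + 1) = 0)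
    (hrec : ∀ s : ℕ, s ≤ k + 1 → S (k + 1) s = q * S k (s - 1) + (1 - q) * S k s) :
    rowSum S α (k + 1) = (1 - (1 - α) * q) * rowSum S α k := by
  calc rowSum S α (k + 1)
      = q * ∑ s ∈ range (k + 2), α ^ s * S k ((s : ℤ) - 1)
          + (1 - q) * ∑ s ∈ range (k + 2), α ^ s * S k s := by
        rw [rowSum, mul_sum, mul_sum, ← sum_add_distrib]
        refine sum_congr rfl fun s hs => ?_
        rw [hrec s (Nat.lt_succ_iff.mp (mem_range.mp hs))]
        ring
    _ = (1 - (1 - α) * q) * rowSum S α k := by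
        rw [sum_pow_mul_shift_eq_mul_rowSum α hlow, sum_pow_mul_eq_rowSum α hhigh]
        ring

lemma rowSum_eq_prod {N : ℕ} {p : ℕ → R} (hS0 : S 0 0 = 1)
    (hlow : ∀ k < N, S k (-1) = 0) (hhigh : ∀ k < N, S k (k + 1) = 0)
    (hrec : ∀ k < N, ∀ s : ℕ, s ≤ k + 1 →
      S (k + 1) s = p (k + 1) * S k (s - 1) + (1 - p (k + 1)) * S k s) :
    ∀ k ≤ N, rowSum S α k = ∏ j ∈ Icc 1 k, (1 - (1 - α) * p j) := by
  intro k
  induction k with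
  | zero => simp [rowSum, hS0]
  | succ k ih =>
    intro hk
    rw [rowSum_succ α (hlow k hk) (hhigh k hk) (hrec k hk), ih (Nat.le_of_succ_le hk),
      prod_Icc_succ_top (by omega), mul_comm]

end RowSum

/-- Theorem 1, algebraic form: With `S` as in the recursion and the rank-score
`Υ i = p i * ∑_{s=0}^{i-1} α^s * S (i-1) s`, for every `1 ≤ i ≤ N`,
`Υ i = p i * ∏_{j=1}^{i-1} (1 - (1-α) * p j)`, i.e. `Υ(t_i) = m_i * ∏_{j<i} c_j`
with `m_i = p_i` and `c_j = 1-(1-α)*p_j`. -/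
theorem stmt_2 (N : ℕ) (p : ℕ → ℝ) (α : ℝ) (S : ℕ → ℤ → ℝ)
    (hS0 : S 0 0 = 1)
    (hSout : ∀ (i : ℕ) (r : ℤ), i ≤ N → (r < 0 ∨ (i : ℤ) < r) → S i r = 0)
    (hSrec : ∀ (i : ℕ) (r : ℤ), 1 ≤ i → i ≤ N → 0 ≤ r → r ≤ (i : ℤ) →
      S i r = p i * S (i - 1) (r - 1) + (1 - p i) * S (i - 1) r)
    (Υ : ℕ → ℝ)
    (hΥ : ∀ i, 1 ≤ i → i ≤ N → Υ i = p i * ∑ s ∈ Finset.range i, α ^ s * S (i - 1) (s : ℤ))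
    (i : ℕ) (hi1 : 1 ≤ i) (hiN : i ≤ N) :
    Υ i = p i * ∏ j ∈ Finset.Icc 1 (i - 1), (1 - (1 - α) * p j) := by
  have hrow := rowSum_eq_prod α (N := N) (p := p) hS0
    (fun k hk => hSout k _ (by omega) (by omega)) (fun k hk => hSout k _ (by omega) (by omega))
    fun k hk s hs => by simpa using hSrec (k + 1) s (by omega) hk (by omega) (by omega)
  obtain ⟨k, rfl⟩ := Nat.exists_eq_add_of_le' hi1
  rw [hΥ _ hi1 hiN, Nat.add_sub_cancel, ← hrow k (by omega), rowSum]
end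

section
/- Suppose a new independent tuple with probability q is inserted at position k (its score lies between those of t_{k-1} and t_k), producing the probability sequence p'_1,…,p'_{N+1} = p_1,…,p_{k-1}, q, p_k,…,p_N with rank-scores Υ'. Then for every old tuple t_i: if i < k then Υ'(t_i) = Υ(i) (its rank-score is unchanged), and if i ≥ k then Υ'(t_i) = (1-(1-α)·q)·Υ(i). Consequently, if 1-(1-α)·q > 0, then for any two old tuples t_a, t_b with either both a,b < k or both a,b ≥ k, Υ'(t_a) ≤ Υ'(t_b) if and only if Υ(a) ≤ Υ(b). -/
/-!
Inserting `q` at position `k` leaves the first `k - 1` entries unchanged, so the products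
`∏_{j<i} (1 - (1-α) p'_j)` for `i ≤ k` are the old ones. For an old tuple after position `k`
the product gains exactly one extra factor `1 - (1-α) q`, and the remaining factors are the old
ones shifted by one. Multiplication by a positive constant preserves order.
-/

open Finset

namespace PRFe

def insertAt {α : Type*} (u : ℕ → α) (c : α) (k : ℕ) (i : ℕ) : α :=
  if i < k then u i else if i = k then c else u (i - 1)

noncomputable def rankScore (α : ℝ) (p : ℕ → ℝ) (i : ℕ) : ℝ :=
  p i * ∏ j ∈ Icc 1 (i - 1), (1 - (1 - α) * p j)

section insertAt

variable {α M : Type*} [CommMonoid M] (f : α → M) {u : ℕ → α} {c : α} {k : ℕ}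

theorem insertAt_of_lt {i : ℕ} (hi : i < k) : insertAt u c k i = u i := if_pos hi

theorem insertAt_self : insertAt u c k k = c := by simp [insertAt]

theorem insertAt_succ_of_le {i : ℕ} (hi : k ≤ i) : insertAt u c k (i + 1) = u i := by
  simp [insertAt, show ¬i + 1 < k by omega, show i + 1 ≠ k by omega]

theorem prod_Icc_insertAt_of_lt {m : ℕ} (hm : m < k) :
    ∏ j ∈ Icc 1 m, f (insertAt u c k j) = ∏ j ∈ Icc 1 m, f (u j) :=
  prod_congr rfl fun j hj => by rw [insertAt_of_lt (by grind)]

theorem prod_Icc_insertAt_succ (hk : 1 ≤ k) {m : ℕ} (hkm : k ≤ m + 1) :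
    ∏ j ∈ Icc 1 (m + 1), f (insertAt u c k j) = f c * ∏ j ∈ Icc 1 m, f (u j) := by
  induction m with
  | zero =>
    obtain rfl : k = 1 := by omega
    simp [insertAt_self]
  | succ m ih =>
    rw [prod_Icc_succ_top (show 1 ≤ m + 1 + 1 by omega)]
    rcases Nat.lt_or_ge m (k - 1) with hmk | hkm'
    · obtain rfl : k = m + 2 := by omega
      rw [prod_Icc_insertAt_of_lt f (by omega), insertAt_self, mul_comm]
    · rw [ih (by omega), insertAt_succ_of_le (by omega),
        prod_Icc_succ_top (show 1 ≤ m + 1 by omega), mul_assoc]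

end insertAt

variable {α : ℝ} {p : ℕ → ℝ}

theorem rankScore_congr {p' : ℕ → ℝ} {i : ℕ} (h : ∀ j ∈ Icc 1 i, p' j = p j)
    (hi : 1 ≤ i) : rankScore α p' i = rankScore α p i := by
  unfold rankScore
  rw [h i (by simp [hi]), prod_congr rfl fun j hj => by rw [h j (by grind)]]

theorem rankScore_insertAt_of_lt {q : ℝ} {k i : ℕ} (hi : i < k) :
    rankScore α (insertAt p q k) i = rankScore α p i := by
  unfold rankScore
  rw [insertAt_of_lt hi, prod_Icc_insertAt_of_lt (fun x => 1 - (1 - α) * x) (by omega)]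

theorem rankScore_insertAt_succ {q : ℝ} {k i : ℕ} (hk : 1 ≤ k) (hi : k ≤ i) :
    rankScore α (insertAt p q k) (i + 1) = (1 - (1 - α) * q) * rankScore α p i := by
  obtain ⟨n, rfl⟩ : ∃ n, i = n + 1 := ⟨i - 1, by omega⟩
  unfold rankScore
  rw [Nat.add_sub_cancel, insertAt_succ_of_le hi,
    prod_Icc_insertAt_succ (fun x => 1 - (1 - α) * x) hk hi, Nat.add_sub_cancel]
  ring

end PRFe

open PRFe in
theorem stmt_6_general (N : ℕ) (p : ℕ → ℝ) (α q : ℝ) (k : ℕ) (hk1 : 1 ≤ k)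
    (p' : ℕ → ℝ)
    (hp' : ∀ i, 1 ≤ i → i ≤ N + 1 →
      p' i = if i < k then p i else if i = k then q else p (i - 1))
    (Υ Υ' : ℕ → ℝ)
    (hΥ : ∀ i, Υ i = p i * ∏ j ∈ Finset.Icc 1 (i - 1), (1 - (1 - α) * p j))
    (hΥ' : ∀ i, Υ' i = p' i * ∏ j ∈ Finset.Icc 1 (i - 1), (1 - (1 - α) * p' j)) :
    (∀ i, 1 ≤ i → i ≤ N → i < k → Υ' i = Υ i) ∧
    (∀ i, 1 ≤ i → i ≤ N → k ≤ i → Υ' (i + 1) = (1 - (1 - α) * q) * Υ i) ∧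
    (0 < 1 - (1 - α) * q →
      ∀ a b, 1 ≤ a → a ≤ N → 1 ≤ b → b ≤ N →
        ((a < k ∧ b < k) ∨ (k ≤ a ∧ k ≤ b)) →
        ((if a < k then Υ' a else Υ' (a + 1)) ≤ (if b < k then Υ' b else Υ' (b + 1)) ↔
          Υ a ≤ Υ b)) := by
  have hΥ_eq : Υ = rankScore α p := funext hΥ
  have hΥ'_eq : ∀ i, 1 ≤ i → i ≤ N + 1 → Υ' i = rankScore α (insertAt p q k) i :=
    fun i hi hiN => (hΥ' i).trans <| rankScore_congr (fun j hj => hp' j (by grind) (by grind)) hi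
  have before : ∀ i, 1 ≤ i → i ≤ N → i < k → Υ' i = Υ i := fun i hi hiN hik => by
    rw [hΥ'_eq i hi (by omega), rankScore_insertAt_of_lt hik, hΥ_eq]
  have after : ∀ i, 1 ≤ i → i ≤ N → k ≤ i → Υ' (i + 1) = (1 - (1 - α) * q) * Υ i :=
    fun i _ hiN hki => by
      rw [hΥ'_eq (i + 1) (by omega) (by omega), rankScore_insertAt_succ hk1 hki, hΥ_eq]
  refine ⟨before, after, fun hq a b ha haN hb hbN hab => ?_⟩
  rcases hab with ⟨hak, hbk⟩ | ⟨hak, hbk⟩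
  · rw [if_pos hak, if_pos hbk, before a ha haN hak, before b hb hbN hbk]
  · rw [if_neg (by omega), if_neg (by omega), after a ha haN hak, after b hb hbN hbk]
    exact mul_le_mul_iff_right₀ hq

/-- Inserting a new independent tuple with probability `q` at position `k`
(producing `p' = p_1, …, p_(k-1), q, p_k, …, p_N`) leaves the rank-score of old tuples `t i`
with `i < k` unchanged, and scales the rank-score of old tuples `t i` with `i ≥ k` by
`1-(1-α)*q`. Consequently, if `1-(1-α)*q > 0`, the relative order of any two old tuples that
are both below position `k` or both at/after position `k` is preserved. -/
theorem stmt_6 (N : ℕ) (p : ℕ → ℝ) (α q : ℝ) (k : ℕ) (hk1 : 1 ≤ k) (hkN : k ≤ N + 1)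
    (p' : ℕ → ℝ)
    (hp' : ∀ i, 1 ≤ i → i ≤ N + 1 →
      p' i = if i < k then p i else if i = k then q else p (i - 1))
    (Υ Υ' : ℕ → ℝ)
    (hΥ : ∀ i, Υ i = p i * ∏ j ∈ Finset.Icc 1 (i - 1), (1 - (1 - α) * p j))
    (hΥ' : ∀ i, Υ' i = p' i * ∏ j ∈ Finset.Icc 1 (i - 1), (1 - (1 - α) * p' j)) :
    (∀ i, 1 ≤ i → i ≤ N → i < k → Υ' i = Υ i) ∧
    (∀ i, 1 ≤ i → i ≤ N → k ≤ i → Υ' (i + 1) = (1 - (1 - α) * q) * Υ i) ∧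
    (0 < 1 - (1 - α) * q →
      ∀ a b, 1 ≤ a → a ≤ N → 1 ≤ b → b ≤ N →
        ((a < k ∧ b < k) ∨ (k ≤ a ∧ k ≤ b)) →
        ((if a < k then Υ' a else Υ' (a + 1)) ≤ (if b < k then Υ' b else Υ' (b + 1)) ↔
          Υ a ≤ Υ b)) :=
  stmt_6_general N p α q k hk1 p' hp' Υ Υ' hΥ hΥ'
end

section
/- (Merge correctness, argmax form) Let 1 ≤ M < N, let T = {1,…,N}, L = {1,…,M}, R = {M+1,…,N}, and C_L = ∏_{j=1}^{M} c_j. Suppose a ∈ L maximizes f_L over L and b ∈ R maximizes f_R over R. Then f_T attains its maximum over T at a or at b: if f_L(a) ≥ C_L·f_R(b) then f_T(a) = max_{i∈T} f_T(i), and otherwise f_T(b) = max_{i∈T} f_T(i). -/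
/-! Splitting `T = L ∪ R` with every index of `L` below every index of `R`, the rank-score of
`i ∈ L` relative to `T` equals its score relative to `L`, while that of `i ∈ R` is `C_L` times its
score relative to `R`. Hence the maximum of `f_T` over `L` is `f_L a`, over `R` it is `C_L · f_R b`,
and the larger of the two is the maximum over `T`. -/

open Finset

theorem Finset.sup'_eq_of_isMaxOn {α β : Type*} [SemilatticeSup β] {s : Finset α} {f : α → β}
    {a : α} (H : s.Nonempty) (ha : a ∈ s) (hmax : IsMaxOn f s a) : s.sup' H f = f a :=
  (sup'_le H f hmax).antisymm (le_sup' f ha)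

theorem Finset.disjoint_of_forall_lt {α : Type*} [Preorder α] {s t : Finset α}
    (h : ∀ x ∈ s, ∀ y ∈ t, x < y) : Disjoint s t :=
  disjoint_left.mpr fun x hs ht => (h x hs x ht).false

noncomputable def rankScore (m c : ℕ → ℝ) (U : Finset ℕ) (i : ℕ) : ℝ :=
  m i * ∏ j ∈ U.filter (· < i), c j

namespace rankScore

variable {m c : ℕ → ℝ} {L R : Finset ℕ} {i a b : ℕ}

theorem union_of_forall_le (h : ∀ j ∈ R, i ≤ j) :
    rankScore m c (L ∪ R) i = rankScore m c L i := by
  have hR : R.filter (· < i) = ∅ := filter_false_of_mem fun j hj => (h j hj).not_gt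
  simp only [rankScore, filter_union, hR, union_empty]

theorem union_of_forall_lt (hLR : Disjoint L R) (h : ∀ j ∈ L, j < i) :
    rankScore m c (L ∪ R) i = (∏ j ∈ L, c j) * rankScore m c R i := by
  have hL : L.filter (· < i) = L := filter_true_of_mem h
  rw [rankScore, rankScore, filter_union, hL,
    prod_union (hLR.mono_right (filter_subset _ R))]
  ring

variable (hsep : ∀ x ∈ L, ∀ y ∈ R, x < y) (hC : 0 ≤ ∏ j ∈ L, c j)
  (ha : a ∈ L) (hamax : IsMaxOn (rankScore m c L) L a)
  (hb : b ∈ R) (hbmax : IsMaxOn (rankScore m c R) R b)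
include hsep hC hamax hbmax

theorem union_le_max (hi : i ∈ L ∪ R) :
    rankScore m c (L ∪ R) i ≤ max (rankScore m c L a) ((∏ j ∈ L, c j) * rankScore m c R b) := by
  rcases mem_union.mp hi with hiL | hiR
  · rw [union_of_forall_le fun j hj => (hsep i hiL j hj).le]
    exact le_max_of_le_left (hamax hiL)
  · rw [union_of_forall_lt (disjoint_of_forall_lt hsep) fun j hj => hsep j hj i hiR]
    exact le_max_of_le_right (mul_le_mul_of_nonneg_left (hbmax hiR) hC)

include ha in
theorem isMaxOn_union_left (h : (∏ j ∈ L, c j) * rankScore m c R b ≤ rankScore m c L a) :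
    IsMaxOn (rankScore m c (L ∪ R)) ↑(L ∪ R) a := fun i hi => by
  rw [Set.mem_ofPred_eq, union_of_forall_le fun j hj => (hsep a ha j hj).le]
  exact (union_le_max hsep hC hamax hbmax hi).trans (max_le le_rfl h)

include hb in
theorem isMaxOn_union_right (h : rankScore m c L a ≤ (∏ j ∈ L, c j) * rankScore m c R b) :
    IsMaxOn (rankScore m c (L ∪ R)) ↑(L ∪ R) b := fun i hi => by
  rw [Set.mem_ofPred_eq, union_of_forall_lt (disjoint_of_forall_lt hsep)
    fun j hj => hsep j hj b hb]
  exact (union_le_max hsep hC hamax hbmax hi).trans (max_le h le_rfl)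

end rankScore

/-- Merge correctness, argmax form: with `f_U i = m i * ∏_{j ∈ U, j < i} c j`,
`T = {1,…,N}`, `L = {1,…,M}`, `R = {M+1,…,N}` and `C_L = ∏_{j=1}^{M} c j`, if `a` maximizes
`f_L` over `L` and `b` maximizes `f_R` over `R`, then `f_T` attains its maximum over `T` at `a`
or at `b`: if `f_L a ≥ C_L * f_R b` then `f_T a = max_{i∈T} f_T i`, and otherwise
`f_T b = max_{i∈T} f_T i`. -/
theorem stmt_8 (N M : ℕ) (hM : 1 ≤ M) (hMN : M < N) (m c : ℕ → ℝ) (hc : ∀ j, 0 < c j)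
    (a b : ℕ) (ha : a ∈ Finset.Icc 1 M) (hb : b ∈ Finset.Icc (M + 1) N)
    (hamax : ∀ i ∈ Finset.Icc 1 M,
      m i * ∏ j ∈ (Finset.Icc 1 M).filter (fun j => j < i), c j ≤
        m a * ∏ j ∈ (Finset.Icc 1 M).filter (fun j => j < a), c j)
    (hbmax : ∀ i ∈ Finset.Icc (M + 1) N,
      m i * ∏ j ∈ (Finset.Icc (M + 1) N).filter (fun j => j < i), c j ≤
        m b * ∏ j ∈ (Finset.Icc (M + 1) N).filter (fun j => j < b), c j) :
    ((∏ j ∈ Finset.Icc 1 M, c j) *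
          (m b * ∏ j ∈ (Finset.Icc (M + 1) N).filter (fun j => j < b), c j) ≤
        m a * ∏ j ∈ (Finset.Icc 1 M).filter (fun j => j < a), c j →
      m a * ∏ j ∈ (Finset.Icc 1 N).filter (fun j => j < a), c j
        = (Finset.Icc 1 N).sup' (Finset.nonempty_Icc.mpr (hM.trans hMN.le))
            (fun i => m i * ∏ j ∈ (Finset.Icc 1 N).filter (fun j => j < i), c j)) ∧
    (m a * ∏ j ∈ (Finset.Icc 1 M).filter (fun j => j < a), c j <
        (∏ j ∈ Finset.Icc 1 M, c j) *
          (m b * ∏ j ∈ (Finset.Icc (M + 1) N).filter (fun j => j < b), c j) →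
      m b * ∏ j ∈ (Finset.Icc 1 N).filter (fun j => j < b), c j
        = (Finset.Icc 1 N).sup' (Finset.nonempty_Icc.mpr (hM.trans hMN.le))
            (fun i => m i * ∏ j ∈ (Finset.Icc 1 N).filter (fun j => j < i), c j)) := by
  have hT : Icc 1 N = Icc 1 M ∪ Icc (M + 1) N := by
    ext j; simp only [mem_union, mem_Icc]; omega
  have hsep : ∀ x ∈ Icc 1 M, ∀ y ∈ Icc (M + 1) N, x < y := by
    intro x hx y hy; rw [mem_Icc] at hx hy; omega
  have hC : 0 ≤ ∏ j ∈ Icc 1 M, c j := prod_nonneg fun j _ => (hc j).le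
  have haT : a ∈ Icc 1 N := hT ▸ mem_union_left _ ha
  have hbT : b ∈ Icc 1 N := hT ▸ mem_union_right _ hb
  refine ⟨fun h => (sup'_eq_of_isMaxOn (f := rankScore m c (Icc 1 N)) _ haT ?_).symm,
    fun h => (sup'_eq_of_isMaxOn (f := rankScore m c (Icc 1 N)) _ hbT ?_).symm⟩
  · rw [hT]; exact rankScore.isMaxOn_union_left hsep hC ha hamax hbmax h
  · rw [hT]; exact rankScore.isMaxOn_union_right hsep hC hamax hb hbmax h.le
end

section
/- (Ratio lemma, correlated case) For every 1 ≤ i ≤ N-1, Υ(i+1)/m_{i+1} = c_i · (Υ(i)/m_i). -/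
/-!
Dividing `Υ j` by `m j` supplies the factor for `b = π j` that the rank-score leaves out, so
`Υ j / m j = ∏_b (1 - (1 - α) Pr(b, j))`. Going from `j = i` to `j = i + 1` only changes
`Pr(π i, ·)`, which grows by `p i`; hence the product is multiplied by exactly `c i`.
The denominators are positive because `Pr(b, j) ≤ 1` and `α > 0`.
-/

open Finset

namespace RankScore

variable {B : Type*} [DecidableEq B] (π : ℕ → B)

/-- `Pr b i` of the paper: the mass of the tuples of `b` scoring above tuple `i`. -/
def prefixMass {M : Type*} [AddCommMonoid M] (p : ℕ → M) (b : B) (i : ℕ) : M :=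
  ∑ j ∈ (Ico 1 i).filter (fun j => π j = b), p j

theorem prefixMass_succ {M : Type*} [AddCommMonoid M] (p : ℕ → M) (b : B) {i : ℕ} (hi : 1 ≤ i) :
    prefixMass π p b (i + 1) = prefixMass π p b i + if π i = b then p i else 0 := by
  rw [prefixMass, prefixMass, sum_filter, sum_filter, sum_Ico_succ_top hi]

variable {p : ℕ → ℝ} {N : ℕ} (hp : ∀ j ∈ Icc 1 N, 0 ≤ p j)
include hp

theorem prefixMass_le_total (b : B) {i : ℕ} (hi : i ≤ N + 1) :
    prefixMass π p b i ≤ ∑ j ∈ (Icc 1 N).filter (fun j => π j = b), p j := by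
  refine sum_le_sum_of_subset_of_nonneg (filter_subset_filter _ fun j hj => ?_)
    fun j hj _ => hp j (mem_filter.mp hj).1
  simp only [mem_Ico, mem_Icc] at hj ⊢
  omega

end RankScore

theorem one_sub_mul_pos {α x : ℝ} (hα0 : 0 < α) (hα1 : α ≤ 1) (hx : x ≤ 1) :
    0 < 1 - (1 - α) * x := by
  have : (1 - α) * x ≤ 1 - α := mul_le_of_le_one_right (by linarith) hx
  linarith

theorem Finset.mul_prod_erase_div_div {ι K : Type*} [DecidableEq ι] [Field K] {s : Finset ι}
    {a : ι} (ha : a ∈ s) (g : ι → K) {x : K} (hx : x ≠ 0) (hg : g a ≠ 0) :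
    (x * ∏ b ∈ s.erase a, g b) / (x / g a) = ∏ b ∈ s, g b := by
  rw [← mul_prod_erase s g ha]
  field_simp

theorem Finset.prod_eq_div_mul_prod_of_eq_off {ι K : Type*} [DecidableEq ι] [Field K]
    {s : Finset ι} {a : ι} (ha : a ∈ s) {f g : ι → K} (hfg : ∀ b ∈ s, b ≠ a → f b = g b)
    (hg : g a ≠ 0) : ∏ b ∈ s, f b = f a / g a * ∏ b ∈ s, g b := by
  rw [← mul_prod_erase s f ha, ← mul_prod_erase s g ha,
    prod_congr rfl fun b hb => hfg b (mem_of_mem_erase hb) (ne_of_mem_erase hb)]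
  field_simp

open RankScore in
/-- Ratio lemma, correlated case: with `Pr b i = ∑_{j < i, π j = b} p j`,
`p̂ i = Pr (π i) i`, `m i = p i / (1-(1-α)*p̂ i)`,
`c i = (1-(1-α)*(p̂ i + p i)) / (1-(1-α)*p̂ i)` and rank-score
`Υ i = p i * ∏_{b ≠ π i} (1-(1-α)*Pr b i)`, for every `1 ≤ i ≤ N-1`,
`Υ (i+1) / m (i+1) = c i * (Υ i / m i)`. -/
theorem stmt_11 (N : ℕ) (α : ℝ) (hα0 : 0 < α) (hα1 : α ≤ 1)
    {B : Type*} [Fintype B] [DecidableEq B] (π : ℕ → B) (p : ℕ → ℝ)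
    (hp : ∀ i, 1 ≤ i → i ≤ N → 0 < p i)
    (hsum : ∀ b : B, ∑ j ∈ (Finset.Icc 1 N).filter (fun j => π j = b), p j ≤ 1)
    (Pr : B → ℕ → ℝ)
    (hPr : ∀ (b : B) (i : ℕ), Pr b i = ∑ j ∈ (Finset.Ico 1 i).filter (fun j => π j = b), p j)
    (phat m c Υ : ℕ → ℝ)
    (hphat : ∀ i, phat i = Pr (π i) i)
    (hm : ∀ i, m i = p i / (1 - (1 - α) * phat i))
    (hc : ∀ i, c i = (1 - (1 - α) * (phat i + p i)) / (1 - (1 - α) * phat i))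
    (hΥ : ∀ i, Υ i = p i * ∏ b ∈ Finset.univ.erase (π i), (1 - (1 - α) * Pr b i))
    (i : ℕ) (hi1 : 1 ≤ i) (hiN : i ≤ N - 1) :
    Υ (i + 1) / m (i + 1) = c i * (Υ i / m i) := by
  obtain rfl : Pr = prefixMass π p := funext₂ hPr
  obtain rfl : phat = fun j => prefixMass π p (π j) j := funext hphat
  obtain rfl := funext hm
  obtain rfl := funext hc
  obtain rfl := funext hΥ
  have hpos : ∀ j ≤ N + 1, 0 < 1 - (1 - α) * prefixMass π p (π j) j := fun j hj =>
    one_sub_mul_pos hα0 hα1 <| (prefixMass_le_total π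
      (fun k hk => (hp k (mem_Icc.1 hk).1 (mem_Icc.1 hk).2).le) _ hj).trans (hsum _)
  have hratio (j : ℕ) (hj1 : 1 ≤ j) (hjN : j ≤ N) :
      (p j * ∏ b ∈ univ.erase (π j), (1 - (1 - α) * prefixMass π p b j)) /
        (p j / (1 - (1 - α) * prefixMass π p (π j) j)) =
      ∏ b, (1 - (1 - α) * prefixMass π p b j) :=
    mul_prod_erase_div_div (mem_univ _) _ (hp j hj1 hjN).ne' (hpos j (by omega)).ne'
  beta_reduce
  rw [hratio (i + 1) (by omega) (by omega), hratio i hi1 (by omega),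
    prod_eq_div_mul_prod_of_eq_off (mem_univ (π i))
      (g := fun b => 1 - (1 - α) * prefixMass π p b i) (fun b _ hb => ?_) (hpos i (by omega)).ne',
    prefixMass_succ π p _ hi1, if_pos rfl]
  rw [prefixMass_succ π p _ hi1, if_neg (Ne.symm hb), add_zero]
end

section
/- (Theorem 2) For every 1 ≤ i ≤ N, Υ(i) = m_i · ∏_{j=1}^{i-1} c_j. -/
/-!
Write `f b k = 1 - (1-α)·Pr(b,k)`. Passing from index `k` to `k+1` changes `Pr(b,·)` only
at `b = π(k)`, where it grows by `p_k`; hence `c_k = f(π k, k+1) / f(π k, k)` is exactly the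
ratio `∏_b f(b, k+1) / ∏_b f(b, k)`, and `∏_{j<i} c_j` telescopes to `∏_b f(b, i)`. Dividing
out the factor `b = π(i)` gives `Υ(i) = m_i · ∏_{j<i} c_j`. The denominators are positive
because `Pr(π k, k) + p_k ≤ 1` and `p_k > 0`.
-/

open Finset

section PrefixMass

variable {R B : Type*} [AddCommMonoid R] [DecidableEq B]

/-- The paper's `Pr(b, i)`. -/
def prefixMass (π : ℕ → B) (p : ℕ → R) (b : B) (i : ℕ) : R :=
  ∑ j ∈ (Ico 1 i).filter (fun j => π j = b), p j

variable (π : ℕ → B) (p : ℕ → R)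

@[simp]
lemma prefixMass_zero (b : B) : prefixMass π p b 0 = 0 := by
  simp [prefixMass]

@[simp]
lemma prefixMass_one (b : B) : prefixMass π p b 1 = 0 := by
  simp [prefixMass]

lemma prefixMass_succ {k : ℕ} (hk : 1 ≤ k) (b : B) :
    prefixMass π p b (k + 1) = prefixMass π p b k + if π k = b then p k else 0 := by
  rw [prefixMass, prefixMass, Nat.Ico_succ_right_eq_insert_Ico hk, filter_insert]
  split_ifs with h
  · rw [sum_insert (by simp), add_comm]
  · rw [add_zero]

lemma prefixMass_succ_self {k : ℕ} (hk : 1 ≤ k) :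
    prefixMass π p (π k) (k + 1) = prefixMass π p (π k) k + p k := by
  rw [prefixMass_succ π p hk, if_pos rfl]

lemma prefixMass_succ_of_ne {k : ℕ} (hk : 1 ≤ k) {b : B} (hb : b ≠ π k) :
    prefixMass π p b (k + 1) = prefixMass π p b k := by
  rw [prefixMass_succ π p hk, if_neg hb.symm, add_zero]

end PrefixMass

section PrefixMassBounds

variable {R B : Type*} [DecidableEq B] {π : ℕ → B} {p : ℕ → R} {N : ℕ}

lemma prefixMass_nonneg [AddCommMonoid R] [PartialOrder R] [IsOrderedAddMonoid R]
    (hp : ∀ j, 1 ≤ j → j ≤ N → 0 ≤ p j) {i : ℕ} (hi : i ≤ N + 1) (b : B) :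
    0 ≤ prefixMass π p b i :=
  sum_nonneg fun j hj => by
    simp only [mem_filter, mem_Ico] at hj
    exact hp j hj.1.1 (by omega)

lemma prefixMass_le_total [AddCommMonoid R] [PartialOrder R] [IsOrderedAddMonoid R]
    (hp : ∀ j, 1 ≤ j → j ≤ N → 0 ≤ p j) {i : ℕ} (hi : i ≤ N + 1) (b : B) :
    prefixMass π p b i ≤ ∑ j ∈ (Icc 1 N).filter (fun j => π j = b), p j := by
  refine sum_le_sum_of_subset_of_nonneg (filter_subset_filter _ ?_) fun j hj _ => ?_
  · intro j hj
    simp only [mem_Ico, mem_Icc] at hj ⊢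
    omega
  · simp only [mem_filter, mem_Icc] at hj
    exact hp j hj.1.1 hj.1.2

lemma prefixMass_self_lt_one [Field R] [LinearOrder R] [IsStrictOrderedRing R]
    (hp : ∀ j, 1 ≤ j → j ≤ N → 0 < p j)
    (hsum : ∀ b, ∑ j ∈ (Icc 1 N).filter (fun j => π j = b), p j ≤ 1)
    {k : ℕ} (hk : k ≤ N) :
    prefixMass π p (π k) k < 1 := by
  rcases Nat.eq_zero_or_pos k with rfl | hk0
  · simp
  have hle := prefixMass_le_total (π := π) (fun j h1 h2 => (hp j h1 h2).le)
    (by omega : k + 1 ≤ N + 1) (π k)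
  rw [prefixMass_succ_self π p hk0] at hle
  linarith [hp k hk0 hk, hsum (π k)]

end PrefixMassBounds

lemma one_sub_mul_pos_of_lt_one {R : Type*} [Field R] [LinearOrder R] [IsStrictOrderedRing R]
    {β x : R} (hβ : β ≤ 1) (hx0 : 0 ≤ x) (hx1 : x < 1) : 0 < 1 - β * x := by
  nlinarith

section Telescoping

variable {R B : Type*} [Field R] [Fintype B] [DecidableEq B]
  (π : ℕ → B) (p : ℕ → R) (β : R)

lemma prod_one_sub_mul_prefixMass_succ {k : ℕ} (hk : 1 ≤ k) :
    ∏ b, (1 - β * prefixMass π p b (k + 1)) =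
      (1 - β * (prefixMass π p (π k) k + p k)) *
        ∏ b ∈ univ.erase (π k), (1 - β * prefixMass π p b k) := by
  rw [← mul_prod_erase univ _ (mem_univ (π k)), prefixMass_succ_self π p hk]
  congr 1
  refine prod_congr rfl fun b hb => ?_
  rw [prefixMass_succ_of_ne π p hk (ne_of_mem_erase hb)]

theorem prod_Ico_div_eq_prod_one_sub_mul_prefixMass (i : ℕ)
    (hden : ∀ k ∈ Ico 1 i, 1 - β * prefixMass π p (π k) k ≠ 0) :
    ∏ k ∈ Ico 1 i,
        (1 - β * (prefixMass π p (π k) k + p k)) / (1 - β * prefixMass π p (π k) k) =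
      ∏ b, (1 - β * prefixMass π p b i) := by
  induction i with
  | zero => simp
  | succ k ih =>
    rcases Nat.eq_zero_or_pos k with rfl | hk
    · simp
    rw [prod_Ico_succ_top hk, ih fun j hj => hden j (Ico_subset_Ico_right k.le_succ hj),
      prod_one_sub_mul_prefixMass_succ π p β hk, ← mul_prod_erase univ _ (mem_univ (π k)),
      mul_comm, ← mul_assoc, div_mul_cancel₀ _ (hden k (mem_Ico.2 ⟨hk, k.lt_succ_self⟩))]

end Telescoping

theorem stmt_12_general (N : ℕ) (α : ℝ) (hα0 : 0 < α)
    {B : Type*} [Fintype B] [DecidableEq B] (π : ℕ → B) (p : ℕ → ℝ)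
    (hp : ∀ i, 1 ≤ i → i ≤ N → 0 < p i)
    (hsum : ∀ b : B, ∑ j ∈ (Finset.Icc 1 N).filter (fun j => π j = b), p j ≤ 1)
    (Pr : B → ℕ → ℝ)
    (hPr : ∀ (b : B) (i : ℕ), Pr b i = ∑ j ∈ (Finset.Ico 1 i).filter (fun j => π j = b), p j)
    (phat m c Υ : ℕ → ℝ)
    (hphat : ∀ i, phat i = Pr (π i) i)
    (hm : ∀ i, m i = p i / (1 - (1 - α) * phat i))
    (hc : ∀ i, c i = (1 - (1 - α) * (phat i + p i)) / (1 - (1 - α) * phat i))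
    (hΥ : ∀ i, Υ i = p i * ∏ b ∈ Finset.univ.erase (π i), (1 - (1 - α) * Pr b i))
    (i : ℕ) (hiN : i ≤ N) :
    Υ i = m i * ∏ j ∈ Finset.Icc 1 (i - 1), c j := by
  obtain rfl : Pr = prefixMass π p := funext₂ hPr
  have hden : ∀ k ≤ N, 1 - (1 - α) * prefixMass π p (π k) k ≠ 0 := fun k hk =>
    (one_sub_mul_pos_of_lt_one (by linarith)
      (prefixMass_nonneg (fun j h1 h2 => (hp j h1 h2).le) (by omega) _)
      (prefixMass_self_lt_one hp hsum hk)).ne'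
  have hIcc : Icc 1 (i - 1) = Ico 1 i := by
    ext j
    simp only [mem_Icc, mem_Ico]
    omega
  simp only [hΥ, hm, hc, hphat, hIcc]
  rw [prod_Ico_div_eq_prod_one_sub_mul_prefixMass π p _ i
      fun k hk => hden k (by simp only [mem_Ico] at hk; omega),
    ← mul_prod_erase univ _ (mem_univ (π i))]
  field_simp [hden i hiN]

/-- Theorem 2: with `Pr b i = ∑_{j < i, π j = b} p j`, `p̂ i = Pr (π i) i`,
`m i = p i / (1-(1-α)*p̂ i)`, `c i = (1-(1-α)*(p̂ i + p i)) / (1-(1-α)*p̂ i)` and rank-score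
`Υ i = p i * ∏_{b ≠ π i} (1-(1-α)*Pr b i)`, for every `1 ≤ i ≤ N`,
`Υ i = m i * ∏_{j=1}^{i-1} c j`. -/
theorem stmt_12 (N : ℕ) (α : ℝ) (hα0 : 0 < α) (hα1 : α ≤ 1)
    {B : Type*} [Fintype B] [DecidableEq B] (π : ℕ → B) (p : ℕ → ℝ)
    (hp : ∀ i, 1 ≤ i → i ≤ N → 0 < p i)
    (hsum : ∀ b : B, ∑ j ∈ (Finset.Icc 1 N).filter (fun j => π j = b), p j ≤ 1)
    (Pr : B → ℕ → ℝ)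
    (hPr : ∀ (b : B) (i : ℕ), Pr b i = ∑ j ∈ (Finset.Ico 1 i).filter (fun j => π j = b), p j)
    (phat m c Υ : ℕ → ℝ)
    (hphat : ∀ i, phat i = Pr (π i) i)
    (hm : ∀ i, m i = p i / (1 - (1 - α) * phat i))
    (hc : ∀ i, c i = (1 - (1 - α) * (phat i + p i)) / (1 - (1 - α) * phat i))
    (hΥ : ∀ i, Υ i = p i * ∏ b ∈ Finset.univ.erase (π i), (1 - (1 - α) * Pr b i))
    (i : ℕ) (hi1 : 1 ≤ i) (hiN : i ≤ N) :
    Υ i = m i * ∏ j ∈ Finset.Icc 1 (i - 1), c j :=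
  stmt_12_general N α hα0 π p hp hsum Pr hPr phat m c Υ hphat hm hc hΥ i hiN
end
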